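/- arXiv:1203.4523 — 6 statements merged into one kernel-verified Lean document; each statement's English description precedes it below -/
import Mathlib

section
/- The herding update (x_{t+1} ∈ argmax_{x∈X} ⟨w_t, Φ(x)⟩, w_{t+1} = w_t + μ − Φ(x_{t+1})) is equivalent to the conditional gradient (Frank–Wolfe) update with step size ρ_t = 1/(t+1) for minimizing J(g) = ½‖g−μ‖² over the marginal polytope M, under the change of variables g_t = μ − w_t/t. Precisely, if g_t = μ − w_t/t and x_{t+1} maximizes ⟨w_t, Φ(x)⟩, then Φ(x_{t+1}) minimizes ⟨g_t − μ, g⟩ over g ∈ M, and g_{t+1} = (1 − 1/(t+1)) g_t + (1/(t+1)) Φ(x_{t+1}) satisfies g_{t+1} = μ − w_{t+1}/(t+1). -/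
open scoped RealInnerProductSpace

/-- Herding is the conditional gradient (Frank–Wolfe) update with step size
`ρ_t = 1/(t+1)` for `J(g) = ½‖g − μ‖²` over the marginal polytope `M`,
under the change of variables `g_t = μ − w_t / t`. -/
theorem herding_eq_conditional_gradient
    {F : Type*} [NormedAddCommGroup F] [InnerProductSpace ℝ F]
    {X : Type*} (Φ : X → F) (R : ℝ) (hR : ∀ x, ‖Φ x‖ ≤ R)
    (M : Set F) (hM : M = closure (convexHull ℝ (Set.range Φ)))
    (μ : F) (hμ : μ ∈ M)
    (t : ℕ) (ht : 1 ≤ t)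
    (w : ℕ → F) (g : ℕ → F)
    (hg : g t = μ - ((t : ℝ))⁻¹ • w t)
    (x : X) (hx : ∀ y : X, ⟪w t, Φ y⟫ ≤ ⟪w t, Φ x⟫)
    (hw : w (t + 1) = w t + μ - Φ x) :
    (∀ h ∈ M, ⟪g t - μ, Φ x⟫ ≤ ⟪g t - μ, h⟫) ∧
    μ - (((t : ℝ) + 1))⁻¹ • w (t + 1) =
      (1 - ((t : ℝ) + 1)⁻¹) • g t + ((t : ℝ) + 1)⁻¹ • Φ x := by

  have htR : (0:ℝ) < t := by exact_mod_cast ht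
  constructor
  · -- first part
    intro h hh
    have key : ∀ h ∈ M, ⟪w t, h⟫ ≤ ⟪w t, Φ x⟫ := by
      intro h hh
      have hsub : Set.range Φ ⊆ {v | ⟪w t, v⟫ ≤ ⟪w t, Φ x⟫} := by
        rintro _ ⟨y, rfl⟩; exact hx y
      have hconv : Convex ℝ {v | ⟪w t, v⟫ ≤ ⟪w t, Φ x⟫} :=
        convex_halfSpace_le ⟨fun a b => inner_add_right _ _ _,
          fun c a => real_inner_smul_right _ _ _⟩ _
      have hclosed : IsClosed {v : F | ⟪w t, v⟫ ≤ ⟪w t, Φ x⟫} :=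
        isClosed_le (Continuous.inner continuous_const continuous_id) continuous_const
      have := closure_minimal (convexHull_min hsub hconv) hclosed
      rw [hM] at hh
      exact this hh
    have hle := key h hh
    have hgt : g t - μ = (-(t:ℝ)⁻¹) • w t := by
      rw [hg]; rw [neg_smul]; abel
    rw [hgt, real_inner_smul_left, real_inner_smul_left]
    have : (-(t:ℝ)⁻¹) ≤ 0 := neg_nonpos.mpr (by positivity)
    exact mul_le_mul_of_nonpos_left hle this
  · rw [hw, hg]
    have h1 : (t:ℝ) ≠ 0 := ne_of_gt htR
    have h2 : (t:ℝ) + 1 ≠ 0 := by positivity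
    match_scalars <;> field_simp <;> ring
end

section
/- Suppose the ball of radius d > 0 around μ intersected with the affine hull of M is contained in M. Then the conditional gradient algorithm with step size ρ_t = 1/(t+1) applied to J(g) = ½‖g−μ‖² satisfies ½‖g_t − μ‖² ≤ 2R⁴/(d² t²). -/
open scoped RealInnerProductSpace

/-!
Write `e_t = g_t - μ`. Since the relative ball of radius `d` about `μ` lies in `M`, the point
`μ - d e_t / ‖e_t‖` is a competitor in the linear minimisation step, so
`⟪e_t, ḡ_{t+1} - μ⟫ ≤ -d ‖e_t‖`. With `ρ_t = 1/(t+1)` the update reads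
`(t+1) e_{t+1} = t e_t + (ḡ_{t+1} - μ)`, hence for `s_t = t ‖e_t‖`
`s_{t+1}² ≤ s_t² - 2 d s_t + (2R)²`. The right side is convex in `s_t` and at most `C²` at both
ends of `[0, C]` for `C = 2R²/d` (this uses `d ≤ R`, which holds unless `M = {μ}`), so
`s_t ≤ C` for all `t` by induction.
-/

section Normed

variable {F : Type*} [NormedAddCommGroup F] [NormedSpace ℝ F] {M : Set F} {μ : F} {d : ℝ}

theorem add_div_norm_smul_mem_of_closedBall_inter_affineSpan_subset
    (hball : Metric.closedBall μ d ∩ (affineSpan ℝ M : Set F) ⊆ M) (hμ : μ ∈ M)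
    {x : F} (hx : x ∈ M) {c : ℝ} (hc : |c| ≤ d) :
    μ + (c / ‖x - μ‖) • (x - μ) ∈ M := by
  refine hball ⟨?_, ?_⟩
  · rw [Metric.mem_closedBall, dist_eq_norm, add_sub_cancel_left, norm_smul, norm_div,
      Real.norm_eq_abs, norm_norm]
    rcases eq_or_ne ‖x - μ‖ 0 with h | h
    · simpa [h] using (abs_nonneg c).trans hc
    · rwa [div_mul_cancel₀ _ h]
  · simpa [AffineMap.lineMap_apply, add_comm] using
      AffineMap.lineMap_mem (c / ‖x - μ‖) (subset_affineSpan ℝ M hμ) (subset_affineSpan ℝ M hx)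

theorem le_of_closedBall_inter_affineSpan_subset
    (hball : Metric.closedBall μ d ∩ (affineSpan ℝ M : Set F) ⊆ M) (hμ : μ ∈ M) (hd : 0 ≤ d)
    {R : ℝ} (hMR : ∀ g ∈ M, ‖g‖ ≤ R) {x : F} (hx : x ∈ M) (hxμ : x ≠ μ) : d ≤ R := by
  have hpos : 0 < ‖x - μ‖ := norm_pos_iff.2 (sub_ne_zero.2 hxμ)
  have hplus := hMR _ <| add_div_norm_smul_mem_of_closedBall_inter_affineSpan_subset hball hμ hx
    (abs_of_nonneg hd).le
  have hminus := hMR _ <| add_div_norm_smul_mem_of_closedBall_inter_affineSpan_subset hball hμ hx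
    (c := -d) (by rw [abs_neg, abs_of_nonneg hd])
  have hdiff : ‖(μ + (d / ‖x - μ‖) • (x - μ)) - (μ + (-d / ‖x - μ‖) • (x - μ))‖ = 2 * d := by
    rw [add_sub_add_left_eq_sub, ← sub_smul, norm_smul, Real.norm_eq_abs,
      show d / ‖x - μ‖ - -d / ‖x - μ‖ = 2 * d / ‖x - μ‖ by ring,
      abs_of_nonneg (by positivity), div_mul_cancel₀ _ hpos.ne']
  linarith [norm_sub_le (μ + (d / ‖x - μ‖) • (x - μ)) (μ + (-d / ‖x - μ‖) • (x - μ))]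

end Normed

section Inner

variable {F : Type*} [NormedAddCommGroup F] [InnerProductSpace ℝ F] {M : Set F} {μ : F} {d : ℝ}

theorem inner_sub_le_neg_mul_norm_of_isMinOn
    (hball : Metric.closedBall μ d ∩ (affineSpan ℝ M : Set F) ⊆ M) (hμ : μ ∈ M) (hd : 0 ≤ d)
    {x y : F} (hx : x ∈ M) (hy : IsMinOn (fun h => ⟪x - μ, h⟫) M y) :
    ⟪x - μ, y - μ⟫ ≤ -(d * ‖x - μ‖) := by
  have hw := isMinOn_iff.1 hy _ <|
    add_div_norm_smul_mem_of_closedBall_inter_affineSpan_subset hball hμ hx (c := -d)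
      (by rw [abs_neg, abs_of_nonneg hd])
  have hscale : -d / ‖x - μ‖ * ‖x - μ‖ ^ 2 = -(d * ‖x - μ‖) := by
    rcases eq_or_ne ‖x - μ‖ 0 with h | h
    · simp [h]
    · field_simp
  simp only [inner_add_right, real_inner_smul_right, real_inner_self_eq_norm_sq, hscale] at hw
  rw [inner_sub_right]
  linarith

theorem norm_smul_add_sq_le {a b : F} {t : ℝ} (ht : 0 ≤ t) (hab : ⟪a, b⟫ ≤ -(d * ‖a‖)) :
    ‖t • a + b‖ ^ 2 ≤ (t * ‖a‖) ^ 2 - 2 * d * (t * ‖a‖) + ‖b‖ ^ 2 := by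
  rw [norm_add_sq_real, norm_smul, real_inner_smul_left, Real.norm_eq_abs, abs_of_nonneg ht]
  nlinarith [mul_le_mul_of_nonneg_left hab ht]

end Inner

theorem sq_sub_two_mul_add_sq_le {s C d D : ℝ} (hs : 0 ≤ s) (hsC : s ≤ C) (hdC : 2 * d ≤ C)
    (hD : D ^ 2 ≤ 2 * d * C) : s ^ 2 - 2 * d * s + D ^ 2 ≤ C ^ 2 := by
  nlinarith [mul_nonneg (sub_nonneg.2 hsC) (by linarith : 0 ≤ C + s - 2 * d)]

theorem add_one_smul_average_sub {F : Type*} [AddCommGroup F] [Module ℝ F] {t : ℝ} (ht : 0 ≤ t)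
    (x y μ : F) :
    (t + 1) • ((1 - (t + 1)⁻¹) • x + (t + 1)⁻¹ • y - μ) = t • (x - μ) + (y - μ) := by
  have h : t + 1 ≠ 0 := by positivity
  rw [smul_sub, smul_add, smul_smul, smul_smul, mul_sub, mul_one, mul_inv_cancel₀ h]
  module

theorem Convex.iterate_mem {F : Type*} [AddCommGroup F] [Module ℝ F] {M : Set F}
    (hM : Convex ℝ M) {g gbar : ℕ → F} {ρ : ℕ → ℝ} (hρ0 : ∀ t ≥ 1, 0 ≤ ρ t)
    (hρ1 : ∀ t ≥ 1, ρ t ≤ 1) (hg1 : g 1 ∈ M) (hmem : ∀ t ≥ 1, gbar (t + 1) ∈ M)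
    (hrec : ∀ t ≥ 1, g (t + 1) = (1 - ρ t) • g t + ρ t • gbar (t + 1)) :
    ∀ t ≥ 1, g t ∈ M := by
  intro t ht
  induction t, ht using Nat.le_induction with
  | base => exact hg1
  | succ t ht ih =>
    rw [hrec t ht]
    exact hM ih (hmem t ht) (sub_nonneg.2 (hρ1 t ht)) (hρ0 t ht) (sub_add_cancel 1 _)

theorem natCast_mul_norm_le_of_smul_succ_eq {F : Type*} [NormedAddCommGroup F]
    [InnerProductSpace ℝ F] {e b : ℕ → F} {d C : ℝ} (hdC : 2 * d ≤ C) (he1 : ‖e 1‖ ≤ C)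
    (hstep : ∀ t : ℕ, 1 ≤ t → ((t : ℝ) + 1) • e (t + 1) = (t : ℝ) • e t + b t)
    (hinner : ∀ t ≥ 1, ⟪e t, b t⟫ ≤ -(d * ‖e t‖)) (hb : ∀ t ≥ 1, ‖b t‖ ^ 2 ≤ 2 * d * C) :
    ∀ t : ℕ, 1 ≤ t → (t : ℝ) * ‖e t‖ ≤ C := by
  intro t ht
  induction t, ht using Nat.le_induction with
  | base => simpa using he1
  | succ t ht ih =>
    have hs : 0 ≤ (t : ℝ) * ‖e t‖ := by positivity
    have hsq : (((t + 1 : ℕ) : ℝ) * ‖e (t + 1)‖) ^ 2 ≤ C ^ 2 :=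
      calc (((t + 1 : ℕ) : ℝ) * ‖e (t + 1)‖) ^ 2 = ‖((t : ℝ) + 1) • e (t + 1)‖ ^ 2 := by
            rw [norm_smul, Real.norm_eq_abs, abs_of_nonneg (by positivity)]; push_cast; rfl
        _ = ‖(t : ℝ) • e t + b t‖ ^ 2 := by rw [hstep t ht]
        _ ≤ ((t : ℝ) * ‖e t‖) ^ 2 - 2 * d * ((t : ℝ) * ‖e t‖) + ‖b t‖ ^ 2 :=
            norm_smul_add_sq_le t.cast_nonneg (hinner t ht)
        _ ≤ C ^ 2 := sq_sub_two_mul_add_sq_le hs ih hdC (hb t ht)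
    exact (pow_le_pow_iff_left₀ (by positivity) (hs.trans ih) two_ne_zero).1 hsq

theorem conditional_gradient_rate_one_over_t_squared_general
    {F : Type*} [NormedAddCommGroup F] [InnerProductSpace ℝ F]
    (M : Set F) (hMconv : Convex ℝ M)
    (R : ℝ) (hMR : ∀ g ∈ M, ‖g‖ ≤ R)
    (μ : F) (hμ : μ ∈ M)
    (d : ℝ) (hd : 0 < d)
    (hball : Metric.closedBall μ d ∩ (affineSpan ℝ M : Set F) ⊆ M)
    (g gbar : ℕ → F)
    (hg1M : g 1 ∈ M)
    (hmem : ∀ t ≥ 1, gbar (t + 1) ∈ M)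
    (hmin : ∀ t ≥ 1, ∀ h ∈ M, ⟪g t - μ, gbar (t + 1)⟫ ≤ ⟪g t - μ, h⟫)
    (hrec : ∀ t ≥ 1,
      g (t + 1) = (1 - ((t : ℝ) + 1)⁻¹) • g t + ((t : ℝ) + 1)⁻¹ • gbar (t + 1)) :
    ∀ t ≥ 1, (1 / 2) * ‖g t - μ‖ ^ 2 ≤ 2 * R ^ 4 / (d ^ 2 * t ^ 2) := by
  have hgM : ∀ t ≥ 1, g t ∈ M := hMconv.iterate_mem (ρ := fun t => ((t : ℝ) + 1)⁻¹)
    (fun t _ => by positivity) (fun t _ => inv_le_one_of_one_le₀ (by simp)) hg1M hmem hrec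
  by_cases hM : ∀ x ∈ M, x = μ
  · intro t ht
    rw [hM _ (hgM t ht), sub_self, norm_zero, zero_pow two_ne_zero, mul_zero]
    positivity
  push Not at hM
  obtain ⟨x, hx, hxμ⟩ := hM
  have hdR := le_of_closedBall_inter_affineSpan_subset hball hμ hd.le hMR hx hxμ
  have hdist : ∀ y ∈ M, ‖y - μ‖ ≤ 2 * R := fun y hy =>
    (norm_sub_le _ _).trans (by linarith [hMR y hy, hMR μ hμ])
  have hRC : 2 * R ≤ 2 * R ^ 2 / d := by rw [le_div_iff₀ hd]; nlinarith
  have hD : (2 * R) ^ 2 = 2 * d * (2 * R ^ 2 / d) := by field_simp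
  have key := natCast_mul_norm_le_of_smul_succ_eq (e := fun t => g t - μ)
    (b := fun t => gbar (t + 1) - μ) (by linarith) ((hdist _ hg1M).trans hRC)
    (fun t ht => by rw [hrec t ht]; exact add_one_smul_average_sub t.cast_nonneg _ _ _)
    (fun t ht => inner_sub_le_neg_mul_norm_of_isMinOn hball hμ hd.le (hgM t ht)
      (isMinOn_iff.2 (hmin t ht)))
    (fun t ht => hD ▸ pow_le_pow_left₀ (norm_nonneg _) (hdist _ (hmem t ht)) 2)
  intro t ht
  have ht0 : (0 : ℝ) < t := by exact_mod_cast ht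
  rw [le_div_iff₀ (by positivity)]
  calc 1 / 2 * ‖g t - μ‖ ^ 2 * (d ^ 2 * t ^ 2) = d ^ 2 / 2 * ((t : ℝ) * ‖g t - μ‖) ^ 2 := by ring
    _ ≤ d ^ 2 / 2 * (2 * R ^ 2 / d) ^ 2 := by gcongr; exact key t ht
    _ = 2 * R ^ 4 := by field_simp

/-- `O(1/t²)` convergence of the conditional gradient algorithm with steps
`ρ_t = 1/(t+1)` applied to `J(g) = ½‖g − μ‖²` when the ball of radius `d > 0` around
`μ` intersected with the affine hull of `M` is contained in `M`:
`½‖g_t − μ‖² ≤ 2R⁴/(d² t²)`. -/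
theorem conditional_gradient_rate_one_over_t_squared
    {F : Type*} [NormedAddCommGroup F] [InnerProductSpace ℝ F]
    {X : Type*} (Φ : X → F)
    (M : Set F) (hMconv : Convex ℝ M) (hMcpt : IsCompact M)
    (R : ℝ) (hMR : ∀ g ∈ M, ‖g‖ ≤ R)
    (μ : F) (hμ : μ ∈ M)
    (d : ℝ) (hd : 0 < d)
    (hball : Metric.closedBall μ d ∩ (affineSpan ℝ M : Set F) ⊆ M)
    (g gbar : ℕ → F)
    (hg1 : g 1 ∈ Set.range Φ) (hg1M : g 1 ∈ M)
    (hmem : ∀ t ≥ 1, gbar (t + 1) ∈ M)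
    (hmin : ∀ t ≥ 1, ∀ h ∈ M, ⟪g t - μ, gbar (t + 1)⟫ ≤ ⟪g t - μ, h⟫)
    (hrec : ∀ t ≥ 1,
      g (t + 1) = (1 - ((t : ℝ) + 1)⁻¹) • g t + ((t : ℝ) + 1)⁻¹ • gbar (t + 1)) :
    ∀ t ≥ 1, (1 / 2) * ‖g t - μ‖ ^ 2 ≤ 2 * R ^ 4 / (d ^ 2 * t ^ 2) :=
  conditional_gradient_rate_one_over_t_squared_general M hMconv R hMR μ hμ d hd hball g gbar hg1M
    hmem hmin hrec
end

section
/- The condition 'there exists d > 0 such that every element of the affine hull A of M at distance at most d from μ belongs to M' is equivalent to: for all f in the direction space of A, ⟨μ, f⟩ + d‖f‖ ≤ sup_{g∈M} ⟨f, g⟩. -/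
open scoped RealInnerProductSpace

/-!
Both directions test the ball of radius `d` about `μ` against the linear functionals `⟪f, ·⟫`,
`f` in the direction space. If the ball lies in `M`, the point `μ + (d / ‖f‖) • f` of the ball
gives `⟪μ, f⟫ + d‖f‖` as a value of `⟪f, ·⟫` on `M`. Conversely, if `g` lies in the ball, let `p`
be its nearest point in `M` and `f = g - p`: the variational inequality of the projection gives
`sup_M ⟪f, ·⟫ + ‖f‖² ≤ ⟪f, g⟫ ≤ ⟪μ, f⟫ + d‖f‖`, so the dual condition forces `f = 0`, i.e. `g ∈ M`.
-/

section

variable {F : Type*} [NormedAddCommGroup F] [InnerProductSpace ℝ F]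

theorem real_inner_add_div_norm_smul (μ f : F) (d : ℝ) :
    ⟪f, μ + (d / ‖f‖) • f⟫ = ⟪μ, f⟫ + d * ‖f‖ := by
  rcases eq_or_ne f 0 with rfl | hf
  · simp
  · rw [inner_add_right, real_inner_smul_right, real_inner_self_eq_norm_sq, real_inner_comm]
    field_simp [norm_ne_zero_iff.mpr hf]

theorem norm_div_norm_smul_le (f : F) {d : ℝ} (hd : 0 ≤ d) : ‖(d / ‖f‖) • f‖ ≤ d := by
  rcases eq_or_ne f 0 with rfl | hf
  · simpa using hd
  · rw [norm_smul, Real.norm_of_nonneg (by positivity), div_mul_cancel₀ _ (norm_ne_zero_iff.mpr hf)]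

namespace IsCompact

variable {K : Set F}

theorem real_inner_le_sSup_image (hK : IsCompact K) (f : F) {g : F} (hg : g ∈ K) :
    ⟪f, g⟫ ≤ sSup ((fun w : F => ⟪f, w⟫) '' K) :=
  le_csSup (hK.image (continuous_const.inner continuous_id)).bddAbove ⟨g, hg, rfl⟩

/-- Strict separation of `g` from `K` by the functional `⟪g - p, ·⟫`, `p` the projection of `g`. -/
theorem exists_sSup_image_real_inner_add_norm_sq_le (hK : IsCompact K) (hKconv : Convex ℝ K)
    (hKne : K.Nonempty) (g : F) :
    ∃ p ∈ K, sSup ((fun w : F => ⟪g - p, w⟫) '' K) + ‖g - p‖ ^ 2 ≤ ⟪g - p, g⟫ := by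
  obtain ⟨p, hpK, hp⟩ := exists_norm_eq_iInf_of_complete_convex hKne hK.isComplete hKconv g
  have hvar := (norm_eq_iInf_iff_real_inner_le_zero hKconv hpK).mp hp
  have hg : ⟪g - p, g⟫ = ⟪g - p, p⟫ + ‖g - p‖ ^ 2 := by
    rw [← real_inner_self_eq_norm_sq, ← inner_add_right, add_sub_cancel]
  refine ⟨p, hpK, ?_⟩
  rw [hg, add_le_add_iff_right]
  refine csSup_le (hKne.image _) (Set.forall_mem_image.2 fun w hw => ?_)
  have := hvar w hw
  rw [inner_sub_right] at this
  linarith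

end IsCompact

end

theorem ball_in_polytope_iff_dual_condition_general
    {F : Type*} [NormedAddCommGroup F] [InnerProductSpace ℝ F]
    (M : Set F) (hMconv : Convex ℝ M) (hMcpt : IsCompact M)
    (μ : F) (hμ : μ ∈ M)
    (d : ℝ) (hd : 0 < d) :
    (∀ g ∈ (affineSpan ℝ M : Set F), ‖g - μ‖ ≤ d → g ∈ M) ↔
      (∀ f ∈ (affineSpan ℝ M).direction,
        ⟪μ, f⟫ + d * ‖f‖ ≤ sSup ((fun g : F => ⟪f, g⟫) '' M)) := by
  have hμA : μ ∈ affineSpan ℝ M := subset_affineSpan ℝ M hμ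
  constructor
  · intro hball f hf
    have hgA : μ + (d / ‖f‖) • f ∈ affineSpan ℝ M := by
      simpa [vadd_eq_add, add_comm] using
        AffineSubspace.vadd_mem_of_mem_direction (Submodule.smul_mem _ (d / ‖f‖) hf) hμA
    have hgM := hball _ hgA (by simpa using norm_div_norm_smul_le f hd.le)
    exact real_inner_add_div_norm_smul μ f d ▸ hMcpt.real_inner_le_sSup_image f hgM
  · intro hdual g hgA hgμ
    obtain ⟨p, hpM, hsep⟩ := hMcpt.exists_sSup_image_real_inner_add_norm_sq_le hMconv ⟨μ, hμ⟩ g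
    have hdir := hdual (g - p) (AffineSubspace.vsub_mem_direction hgA (subset_affineSpan ℝ M hpM))
    have hgμ' : ⟪g - p, g - μ⟫ ≤ d * ‖g - p‖ :=
      (real_inner_le_norm _ _).trans (by rw [mul_comm]; gcongr)
    have hsq : ‖g - p‖ ^ 2 ≤ 0 := by
      rw [inner_sub_right] at hgμ'
      rw [real_inner_comm (g - p) μ] at hdir
      linarith
    have hgp : g = p := norm_sub_eq_zero_iff.mp (by nlinarith [norm_nonneg (g - p)])
    exact hgp ▸ hpM

/-- For `d > 0`, the condition "every element of the (closed) affine hull `A` of `M` at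
distance at most `d` from `μ` belongs to `M`" is equivalent to:
`∀ f` in the direction space of `A`, `⟪μ, f⟫ + d‖f‖ ≤ sup_{g∈M} ⟪f, g⟫`. -/
theorem ball_in_polytope_iff_dual_condition
    {F : Type*} [NormedAddCommGroup F] [InnerProductSpace ℝ F]
    (M : Set F) (hMne : M.Nonempty) (hMconv : Convex ℝ M) (hMcpt : IsCompact M)
    (μ : F) (hμ : μ ∈ M)
    (d : ℝ) (hd : 0 < d) :
    (∀ g ∈ (affineSpan ℝ M : Set F), ‖g - μ‖ ≤ d → g ∈ M) ↔
      (∀ f ∈ (affineSpan ℝ M).direction,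
        ⟪μ, f⟫ + d * ‖f‖ ≤ sSup ((fun g : F => ⟪f, g⟫) '' M)) :=
  ball_in_polytope_iff_dual_condition_general M hMconv hMcpt μ hμ d hd
end

section
/- Let X be a compact topological space, k a continuous positive definite kernel on X with finite-dimensional RKHS F, and p a Borel probability measure on X with full support. Then the function Ω(f) = max_{x∈X} f(x) − ⟨μ, f⟩, where μ = ∫ Φ(x) dp(x), is a norm on the direction space F̃ of the affine hull of the marginal polytope; consequently there exists d > 0 such that ⟨μ,f⟩ + d‖f‖ ≤ max_{x∈X} f(x) for all f ∈ F̃, i.e., μ lies in the relative interior of M. -/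
open MeasureTheory
open scoped RealInnerProductSpace

/-!
The gap `Ω(f) = max_x ⟪f, Φ x⟫ - ⟪μ, f⟫` is the integral against `p` of the nonnegative continuous
function `x ↦ max ⟪f, Φ⟫ - ⟪f, Φ x⟫`. Since `p` charges every nonempty open set, `Ω(f) = 0` forces
`⟪f, Φ ·⟫` to be constant, so `f` is orthogonal to the direction of the affine hull of the range
of `Φ`; for `f` in that direction this means `f = 0`. Being continuous and positively homogeneous,
`Ω` is then bounded below on the unit sphere of the direction by some `d > 0`, which gives
`⟪μ, f⟫ + d‖f‖ ≤ max_x ⟪f, Φ x⟫`.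
-/

section ContinuousOnCompact

variable {X : Type*} [TopologicalSpace X] [CompactSpace X] [Nonempty X] {g : X → ℝ}

theorem Continuous.exists_forall_le_and_ciSup_eq (hg : Continuous g) :
    ∃ x₀, (∀ x, g x ≤ g x₀) ∧ ⨆ x, g x = g x₀ := by
  obtain ⟨x₀, -, hx₀⟩ := isCompact_univ.exists_isMaxOn Set.univ_nonempty hg.continuousOn
  have hle : ∀ x, g x ≤ g x₀ := fun x => hx₀ (Set.mem_univ x)
  exact ⟨x₀, hle, le_antisymm (ciSup_le hle) (le_ciSup (isCompact_range hg).bddAbove x₀)⟩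

variable [MeasurableSpace X] [OpensMeasurableSpace X] (p : Measure X) [IsProbabilityMeasure p]

theorem Continuous.integral_le_ciSup (hg : Continuous g) : ∫ x, g x ∂p ≤ ⨆ x, g x := by
  obtain ⟨x₀, hle, hsup⟩ := hg.exists_forall_le_and_ciSup_eq
  calc ∫ x, g x ∂p ≤ ∫ _, g x₀ ∂p :=
        integral_mono (hg.integrable_of_hasCompactSupport (.of_compactSpace g))
          (integrable_const _) hle
    _ = ⨆ x, g x := by simp [hsup]

theorem Continuous.eq_ciSup_of_integral_eq [p.IsOpenPosMeasure] (hg : Continuous g)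
    (h : ∫ x, g x ∂p = ⨆ x, g x) (x : X) : g x = ⨆ x, g x := by
  obtain ⟨x₀, hle, hsup⟩ := hg.exists_forall_le_and_ciSup_eq
  have hgi : Integrable g p := hg.integrable_of_hasCompactSupport (.of_compactSpace g)
  have hgap : ∫ y, (g x₀ - g y) ∂p = 0 := by
    rw [integral_sub (integrable_const _) hgi, h, hsup]
    simp
  have hae : (fun y => g x₀ - g y) =ᵐ[p] fun _ => 0 :=
    (integral_eq_zero_iff_of_nonneg (fun y => sub_nonneg.mpr (hle y))
      ((integrable_const _).sub hgi)).mp hgap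
  have hzero : g x₀ - g x = 0 :=
    congrFun (((continuous_const.sub hg).ae_eq_iff_eq p continuous_const).mp hae) x
  linarith

end ContinuousOnCompact

section SupportFunction

variable {F : Type*} [NormedAddCommGroup F] [InnerProductSpace ℝ F] {X : Type*} {Φ : X → F}

theorem continuous_iSup_inner [TopologicalSpace X] [CompactSpace X] (hΦ : Continuous Φ) :
    Continuous fun f : F => ⨆ x, ⟪f, Φ x⟫ := by
  have := isCompact_univ.continuous_sSup (f := fun (f : F) (x : X) => ⟪f, Φ x⟫)
    (continuous_fst.inner (hΦ.comp continuous_snd))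
  simpa only [Set.image_univ, sSup_range] using this

theorem iSup_inner_smul_left {c : ℝ} (hc : 0 ≤ c) (f : F) :
    ⨆ x, ⟪c • f, Φ x⟫ = c * ⨆ x, ⟪f, Φ x⟫ := by
  simp only [real_inner_smul_left, Real.mul_iSup_of_nonneg hc]

theorem inner_eq_zero_of_mem_vectorSpan {s : Set F} {f : F}
    (hconst : ∀ a ∈ s, ∀ b ∈ s, ⟪f, a⟫ = ⟪f, b⟫) {v : F} (hv : v ∈ vectorSpan ℝ s) :
    ⟪f, v⟫ = 0 := by
  have : vectorSpan ℝ s ≤ LinearMap.ker (innerₛₗ ℝ f) := by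
    refine Submodule.span_le.mpr ?_
    rintro _ ⟨a, ha, b, hb, rfl⟩
    simp [inner_sub_right, hconst a ha b hb]
  exact this hv

end SupportFunction

theorem Submodule.exists_pos_mul_norm_le {E : Type*} [NormedAddCommGroup E] [NormedSpace ℝ E]
    [FiniteDimensional ℝ E] (D : Submodule ℝ E) {N : E → ℝ} (hN : Continuous N)
    (hhom : ∀ c : ℝ, 0 ≤ c → ∀ f, N (c • f) = c * N f) (hpos : ∀ f ∈ D, f ≠ 0 → 0 < N f) :
    ∃ d > 0, ∀ f ∈ D, d * ‖f‖ ≤ N f := by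
  have hK : IsCompact ((D : Set E) ∩ Metric.sphere 0 1) :=
    (isCompact_sphere 0 1).inter_left D.closed_of_finiteDimensional
  obtain ⟨d, hd, hdK⟩ := hK.exists_forall_le' hN.continuousOn
    fun u hu => hpos u hu.1 (ne_zero_of_mem_unit_sphere ⟨u, hu.2⟩)
  refine ⟨d, hd, fun f hf => ?_⟩
  rcases eq_or_ne f 0 with rfl | hf0
  · have hN0 : N 0 = 0 := by simpa using hhom 0 le_rfl 0
    simp [hN0]
  have hnorm : 0 < ‖f‖ := norm_pos_iff.mpr hf0
  have hu : ‖f‖⁻¹ • f ∈ (D : Set E) ∩ Metric.sphere 0 1 :=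
    ⟨D.smul_mem _ hf, by simp [norm_smul, hnorm.ne']⟩
  calc d * ‖f‖ ≤ N (‖f‖⁻¹ • f) * ‖f‖ := mul_le_mul_of_nonneg_right (hdK _ hu) hnorm.le
    _ = N f := by rw [mul_comm, ← hhom _ hnorm.le, smul_smul, mul_inv_cancel₀ hnorm.ne', one_smul]

theorem mean_in_relative_interior_finite_dimensional_general
    {F : Type*} [NormedAddCommGroup F] [InnerProductSpace ℝ F]
    [FiniteDimensional ℝ F]
    {X : Type*} [TopologicalSpace X] [CompactSpace X] [Nonempty X]
    [MeasurableSpace X] [BorelSpace X]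
    (Φ : X → F) (hΦ : Continuous Φ)
    (p : Measure X) [IsProbabilityMeasure p]
    (hsupp : ∀ U : Set X, IsOpen U → U.Nonempty → 0 < p U)
    (hint : Integrable Φ p)
    (μ : F) (hμ : μ = ∫ x, Φ x ∂p) :
    (∀ f ∈ (affineSpan ℝ (Set.range Φ)).direction,
        (⨆ x : X, ⟪f, Φ x⟫) - ⟪μ, f⟫ = 0 → f = 0) ∧
    ∃ d > (0 : ℝ), ∀ f ∈ (affineSpan ℝ (Set.range Φ)).direction,
        ⟪μ, f⟫ + d * ‖f‖ ≤ ⨆ x : X, ⟪f, Φ x⟫ := by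
  have : p.IsOpenPosMeasure := ⟨fun U hU hne => (hsupp U hU hne).ne'⟩
  have hcont (f : F) : Continuous fun x => ⟪f, Φ x⟫ := continuous_const.inner hΦ
  have hmean (f : F) : ⟪μ, f⟫ = ∫ x, ⟪f, Φ x⟫ ∂p := by
    rw [real_inner_comm, hμ, integral_inner hint]
  have hle (f : F) : ⟪μ, f⟫ ≤ ⨆ x, ⟪f, Φ x⟫ := hmean f ▸ (hcont f).integral_le_ciSup p
  have hdef : ∀ f ∈ (affineSpan ℝ (Set.range Φ)).direction,
      (⨆ x : X, ⟪f, Φ x⟫) - ⟪μ, f⟫ = 0 → f = 0 := by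
    intro f hf hgap
    have hconst := (hcont f).eq_ciSup_of_integral_eq p (by linarith [hmean f])
    refine inner_self_eq_zero.mp (inner_eq_zero_of_mem_vectorSpan ?_
      (by rwa [direction_affineSpan] at hf))
    rintro _ ⟨x, rfl⟩ _ ⟨y, rfl⟩
    rw [hconst x, hconst y]
  obtain ⟨d, hd, hbound⟩ := (affineSpan ℝ (Set.range Φ)).direction.exists_pos_mul_norm_le
    (N := fun f => (⨆ x, ⟪f, Φ x⟫) - ⟪μ, f⟫)
    ((continuous_iSup_inner hΦ).sub (continuous_const.inner continuous_id))
    (fun c hc f => by rw [iSup_inner_smul_left hc, real_inner_smul_right, mul_sub])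
    fun f hf hf0 => (sub_nonneg.mpr (hle f)).lt_of_ne fun h => hf0 (hdef f hf h.symm)
  exact ⟨hdef, d, hd, fun f hf => by linarith [hbound f hf]⟩

/-- For a continuous kernel with finite-dimensional RKHS `F` on a compact space `X`
and a probability measure `p` of full support, `Ω(f) = max_x f(x) − ⟪μ, f⟫` is a norm
on the direction space `F̃` of the affine hull of the marginal polytope (in particular
it is definite), and consequently there exists `d > 0` with
`⟪μ, f⟫ + d‖f‖ ≤ max_x f(x)` for all `f ∈ F̃`: `μ` is in the relative interior of `M`. -/
theorem mean_in_relative_interior_finite_dimensional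
    {F : Type*} [NormedAddCommGroup F] [InnerProductSpace ℝ F]
    [FiniteDimensional ℝ F]
    {X : Type*} [TopologicalSpace X] [CompactSpace X] [Nonempty X]
    [MeasurableSpace X] [BorelSpace X]
    (Φ : X → F) (hΦ : Continuous Φ)
    (hspan : Submodule.span ℝ (Set.range Φ) = ⊤)
    (p : Measure X) [IsProbabilityMeasure p]
    (hsupp : ∀ U : Set X, IsOpen U → U.Nonempty → 0 < p U)
    (hint : Integrable Φ p)
    (μ : F) (hμ : μ = ∫ x, Φ x ∂p) :
    (∀ f ∈ (affineSpan ℝ (Set.range Φ)).direction,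
        (⨆ x : X, ⟪f, Φ x⟫) - ⟪μ, f⟫ = 0 → f = 0) ∧
    ∃ d > (0 : ℝ), ∀ f ∈ (affineSpan ℝ (Set.range Φ)).direction,
        ⟪μ, f⟫ + d * ‖f‖ ≤ ⨆ x : X, ⟪f, Φ x⟫ :=
  mean_in_relative_interior_finite_dimensional_general Φ hΦ p hsupp hint μ hμ
end

section
/- Let X ⊂ ℝ^d be compact and k a continuous (Mercer) kernel on X whose RKHS F is infinite-dimensional. Then there is no d > 0 such that for all f in the direction space F̃ of the affine hull of the marginal polytope, ⟨μ, f⟩ + d‖f‖ ≤ max_{x∈X} f(x). In other words, μ never lies in the relative interior of M with a ball of positive radius in infinite-dimensional Mercer kernel settings. -/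
/-!
A compact set `K` in a Hilbert space is `ε`-close to a finite set `t`, so a unit vector `f`
orthogonal to `span t` has `|⟪y, f⟫| < ε` for all `y ∈ K`. Such an `f` can be found in any
infinite-dimensional subspace, in particular in the direction space of `affineSpan (range Φ)`,
which is infinite-dimensional because `span (range Φ)` is dense in `F`. Taking
`K = insert μ (range Φ)` and `ε = d / 4` gives `⟪μ, f⟫ + d > 3d / 4 > d / 4 ≥ ⨆ x, ⟪f, Φ x⟫`.
-/

open MeasureTheory
open scoped RealInnerProductSpace

theorem Submodule.span_le_vectorSpan_sup_span_singleton {k V : Type*} [Ring k]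
    [AddCommGroup V] [Module k V] {s : Set V} {p : V} (hp : p ∈ s) :
    span k s ≤ vectorSpan k s ⊔ k ∙ p := by
  rw [span_le]
  intro x hx
  rw [← sub_add_cancel x p]
  exact add_mem_sup (vsub_mem_vectorSpan k hx hp) (mem_span_singleton_self p)

theorem not_finiteDimensional_vectorSpan_of_dense_span {E : Type*} [NormedAddCommGroup E]
    [NormedSpace ℝ E] (hE : ¬ FiniteDimensional ℝ E) {s : Set E}
    (hs : Dense (Submodule.span ℝ s : Set E)) : ¬ FiniteDimensional ℝ (vectorSpan ℝ s) := by
  intro hfin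
  have hspan : FiniteDimensional ℝ (Submodule.span ℝ s) := by
    rcases s.eq_empty_or_nonempty with rfl | ⟨p, hp⟩
    · rw [Submodule.span_empty]
      infer_instance
    · exact Submodule.finiteDimensional_of_le
        (Submodule.span_le_vectorSpan_sup_span_singleton hp)
  have htop : Submodule.span ℝ s = ⊤ := SetLike.coe_injective <|
    (Submodule.span ℝ s).closed_of_finiteDimensional.closure_eq ▸ hs.closure_eq
  have : FiniteDimensional ℝ (⊤ : Submodule ℝ E) := htop ▸ hspan
  exact hE Submodule.topEquiv.finiteDimensional

section

variable {F : Type*} [NormedAddCommGroup F] [InnerProductSpace ℝ F]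

theorem Submodule.exists_norm_eq_one_mem_orthogonal {D S : Submodule ℝ F}
    (hD : ¬ FiniteDimensional ℝ D) [FiniteDimensional ℝ S] :
    ∃ f ∈ D, ‖f‖ = 1 ∧ f ∈ Sᗮ := by
  have hinj : ¬ Function.Injective (S.orthogonalProjectionOnto.toLinearMap ∘ₗ D.subtype) :=
    fun h ↦ hD (Module.Finite.of_injective _ h)
  have hmeet : D ⊓ Sᗮ ≠ ⊥ := by
    rwa [← LinearMap.ker_eq_bot, LinearMap.ker_comp, ker_orthogonalProjectionOnto,
      ← disjoint_iff_comap_eq_bot, disjoint_iff] at hinj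
  obtain ⟨g, ⟨hgD, hgS⟩, hg⟩ := exists_mem_ne_zero_of_ne_bot hmeet
  exact ⟨‖g‖⁻¹ • g, D.smul_mem _ hgD, norm_smul_inv_norm hg, Sᗮ.smul_mem _ hgS⟩

theorem exists_norm_eq_one_forall_abs_inner_lt {D : Submodule ℝ F}
    (hD : ¬ FiniteDimensional ℝ D) {K : Set F} (hK : IsCompact K) {ε : ℝ} (hε : 0 < ε) :
    ∃ f ∈ D, ‖f‖ = 1 ∧ ∀ y ∈ K, |⟪y, f⟫| < ε := by
  obtain ⟨t, -, ht, hcover⟩ := finite_cover_balls_of_compact hK hε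
  have : FiniteDimensional ℝ (Submodule.span ℝ t) := FiniteDimensional.span_of_finite ℝ ht
  obtain ⟨f, hfD, hf, hft⟩ :=
    Submodule.exists_norm_eq_one_mem_orthogonal (S := Submodule.span ℝ t) hD
  refine ⟨f, hfD, hf, fun y hy ↦ ?_⟩
  obtain ⟨z, hz, hyz⟩ := Set.mem_iUnion₂.mp (hcover hy)
  have hzf : ⟪z, f⟫ = 0 :=
    Submodule.inner_right_of_mem_orthogonal (Submodule.subset_span hz) hft
  calc |⟪y, f⟫| = |⟪y - z, f⟫| := by rw [inner_sub_left, hzf, sub_zero]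
    _ ≤ ‖y - z‖ * ‖f‖ := abs_real_inner_le_norm _ _
    _ < ε := by rwa [hf, mul_one, ← dist_eq_norm]

end

theorem mean_not_in_relative_interior_infinite_dimensional_general
    {F : Type*} [NormedAddCommGroup F] [InnerProductSpace ℝ F]
    (hinf : ¬ FiniteDimensional ℝ F)
    (n : ℕ) (X : Set (EuclideanSpace ℝ (Fin n)))
    (hXcpt : IsCompact X)
    (Φ : X → F) (hΦ : Continuous Φ)
    (hspan : Dense (Submodule.span ℝ (Set.range Φ) : Set F))
    (μ : F) :
    ¬ ∃ d > (0 : ℝ), ∀ f ∈ (affineSpan ℝ (Set.range Φ)).direction,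
        ⟪μ, f⟫ + d * ‖f‖ ≤ ⨆ x : X, ⟪f, Φ x⟫ := by
  rintro ⟨d, hd, h⟩
  have : CompactSpace X := isCompact_iff_compactSpace.mp hXcpt
  have hD : ¬ FiniteDimensional ℝ (affineSpan ℝ (Set.range Φ)).direction := by
    rw [direction_affineSpan]
    exact not_finiteDimensional_vectorSpan_of_dense_span hinf hspan
  obtain ⟨f, hfD, hf, hsmall⟩ := exists_norm_eq_one_forall_abs_inner_lt hD
    ((isCompact_range hΦ).insert μ) (by positivity : 0 < d / 4)
  have hμf : -(d / 4) < ⟪μ, f⟫ := (abs_lt.mp (hsmall μ (Set.mem_insert μ _))).1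
  have hsup : ⨆ x : X, ⟪f, Φ x⟫ ≤ d / 4 := by
    refine Real.iSup_le (fun x ↦ ?_) (by positivity)
    rw [real_inner_comm]
    exact (abs_lt.mp (hsmall _ (Set.mem_insert_of_mem μ ⟨x, rfl⟩))).2.le
  have hmean := h f hfD
  rw [hf, mul_one] at hmean
  linarith

/-- For a continuous (Mercer) kernel on a compact subset `X ⊆ ℝ^d` whose RKHS `F` is
infinite-dimensional, there is no `d > 0` such that
`⟪μ, f⟫ + d‖f‖ ≤ max_{x∈X} f(x)` for all `f` in the direction space of the affine
hull of the marginal polytope: `μ` never lies in the relative interior of `M` with a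
ball of positive radius. -/
theorem mean_not_in_relative_interior_infinite_dimensional
    {F : Type*} [NormedAddCommGroup F] [InnerProductSpace ℝ F] [CompleteSpace F]
    (hinf : ¬ FiniteDimensional ℝ F)
    (n : ℕ) (X : Set (EuclideanSpace ℝ (Fin n)))
    (hXcpt : IsCompact X) (hXne : X.Nonempty)
    (Φ : X → F) (hΦ : Continuous Φ)
    (hspan : Dense (Submodule.span ℝ (Set.range Φ) : Set F))
    (R : ℝ) (hR : ∀ x, ‖Φ x‖ ≤ R)
    (hLip : ∀ f : F, ‖f‖ ≤ 1 → ∀ x y : X,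
      |⟪f, Φ x⟫ - ⟪f, Φ y⟫| ≤ 2 * R * dist x y)
    (p : Measure X) [IsProbabilityMeasure p]
    (hint : Integrable Φ p)
    (μ : F) (hμ : μ = ∫ x, Φ x ∂p) :
    ¬ ∃ d > (0 : ℝ), ∀ f ∈ (affineSpan ℝ (Set.range Φ)).direction,
        ⟪μ, f⟫ + d * ‖f‖ ≤ ⨆ x : X, ⟪f, Φ x⟫ :=
  mean_not_in_relative_interior_infinite_dimensional_general hinf n X hXcpt Φ hΦ hspan μ
end

section
/- Let X be a compact metric space and (f_k)_{k≥1} functions on X, each Lipschitz with constant L and with ‖f_k‖_∞ ≥ δ > 0 for all k. If Σ_{k≥1} f_k(x)² < ∞ for every x ∈ X, we reach a contradiction; i.e., there cannot exist infinitely many uniformly Lipschitz functions each of sup-norm at least δ whose squares are pointwise summable on a compact metric space. -/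
/-!
Cover `X` by finitely many balls of radius `δ / (2L)`. Moving from a point where `|f k| ≥ δ` to
the centre of its ball costs at most `δ / 2` by the Lipschitz bound, so every `f k` has
`|f k| ≥ δ / 2` at one of finitely many centres. By pigeonhole a single centre `y` serves
infinitely many `k`, while summability of `f k y ^ 2` allows only finitely many such `k`.
-/

open Metric Set Filter

theorem Summable.finite_setOf_le_norm {ι E : Type*} [SeminormedAddCommGroup E] {a : ι → E}
    (ha : Summable a) {ε : ℝ} (hε : 0 < ε) : {i | ε ≤ ‖a i‖}.Finite := by
  have hsmall : ∀ᶠ i in cofinite, ‖a i‖ < ε :=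
    ha.tendsto_cofinite_zero.norm.eventually (eventually_lt_nhds (by simpa using hε))
  simpa only [not_lt] using eventually_cofinite.1 hsmall

theorem exists_mem_abs_sub_mul_le_abs_of_cover {X : Type*} [PseudoMetricSpace X]
    {f : X → ℝ} {L r : ℝ} (hL : 0 ≤ L) (hf : ∀ x y, |f x - f y| ≤ L * dist x y)
    {t : Set X} (ht : univ ⊆ ⋃ y ∈ t, ball y r) (x : X) :
    ∃ y ∈ t, |f x| - L * r ≤ |f y| := by
  obtain ⟨y, hyt, hxy⟩ := mem_iUnion₂.1 (ht (mem_univ x))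
  refine ⟨y, hyt, ?_⟩
  have hfxy : |f x - f y| ≤ L * r :=
    (hf x y).trans (mul_le_mul_of_nonneg_left (mem_ball.1 hxy).le hL)
  linarith [abs_sub_abs_le_abs_sub (f x) (f y)]

theorem exists_infinite_setOf_half_le_abs {X ι : Type*} [PseudoMetricSpace X] [CompactSpace X]
    [Infinite ι] {L δ : ℝ} (hL : 0 < L) (hδ : 0 < δ) {f : ι → X → ℝ}
    (hLip : ∀ k x y, |f k x - f k y| ≤ L * dist x y) (hsup : ∀ k, ∃ x, δ ≤ |f k x|) :
    ∃ y, {k | δ / 2 ≤ |f k y|}.Infinite := by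
  have hr : 0 < δ / (2 * L) := by positivity
  obtain ⟨t, -, ht⟩ := isCompact_univ.elim_nhds_subcover (fun y : X => ball y (δ / (2 * L)))
    fun y _ => ball_mem_nhds y hr
  have hLr : L * (δ / (2 * L)) = δ / 2 := by field_simp
  have hnet : ∀ k, ∃ y : t, δ / 2 ≤ |f k y| := by
    intro k
    obtain ⟨x, hx⟩ := hsup k
    obtain ⟨y, hyt, hy⟩ := exists_mem_abs_sub_mul_le_abs_of_cover hL.le (hLip k) ht x
    exact ⟨⟨y, hyt⟩, by linarith⟩
  choose g hg using hnet
  obtain ⟨y, hy⟩ := Finite.exists_infinite_fiber g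
  refine ⟨y, (Set.infinite_coe_iff.1 hy).mono fun k hk => ?_⟩
  rw [mem_preimage, mem_singleton_iff] at hk
  exact hk ▸ hg k

theorem no_uniformly_lipschitz_pointwise_square_summable_family_general
    {X : Type*} [MetricSpace X] [CompactSpace X]
    (L δ : ℝ) (hL : 0 < L) (hδ : 0 < δ)
    (f : ℕ → X → ℝ)
    (hLip : ∀ k, ∀ x y : X, |f k x - f k y| ≤ L * dist x y)
    (hsup : ∀ k, ∃ x : X, δ ≤ |f k x|)
    (hsum : ∀ x : X, Summable fun k => (f k x) ^ 2) :
    False := by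
  obtain ⟨y, hinf⟩ := exists_infinite_setOf_half_le_abs hL hδ hLip hsup
  have hfin : {k | (δ / 2) ^ 2 ≤ ‖f k y ^ 2‖}.Finite :=
    (hsum y).finite_setOf_le_norm (by positivity)
  refine hinf (hfin.subset fun k hk => ?_)
  rw [mem_ofPred_eq, Real.norm_eq_abs, abs_pow]
  exact pow_le_pow_left₀ (by positivity) hk 2

/-- On a compact metric space there cannot exist infinitely many uniformly Lipschitz
functions, each of sup-norm at least `δ > 0`, whose squares are pointwise summable. -/
theorem no_uniformly_lipschitz_pointwise_square_summable_family
    {X : Type*} [MetricSpace X] [CompactSpace X] [Nonempty X]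
    (L δ : ℝ) (hL : 0 < L) (hδ : 0 < δ)
    (f : ℕ → X → ℝ)
    (hLip : ∀ k, ∀ x y : X, |f k x - f k y| ≤ L * dist x y)
    (hsup : ∀ k, ∃ x : X, δ ≤ |f k x|)
    (hsum : ∀ x : X, Summable fun k => (f k x) ^ 2) :
    False :=
  no_uniformly_lipschitz_pointwise_square_summable_family_general L δ hL hδ f hLip hsup hsum
end
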